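/- Sequential Gibbs sampling on an n-variable distribution π with total influence α < 1 has mixing time t_mix(ε) ≤ (n/(1−α))·log(n/ε): for all t ≥ (n/(1−α))·log(n/ε) and any initial distribution μ_0, ‖P^{(t)} μ_0 − π‖_TV ≤ ε. -/

import Mathlib

/-!
This is the dual, coupling-free form of the path-coupling argument. For `f` on configurations
let `δⱼ f` be its oscillation in coordinate `j` and `W f = ∑ⱼ δⱼ f`. Resampling a site `i ≠ j`
moves `δⱼ` to at most `δⱼ f + Rᵢⱼ δᵢ f`, where `Rᵢⱼ` is the influence of `j` on `i`, while
resampling `j` itself erases `δⱼ`; averaging over `i` gives `W (P f) ≤ (1 - (1 - α) / n) W f`.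
Since `π` is reversible, hence stationary,
`|μ₀Pᵗ(A) - π(A)| = |∑ (μ₀ - π) Pᵗ 1_A| ≤ W (Pᵗ 1_A) ≤ n (1 - (1 - α) / n)ᵗ`,
which is at most `n e^{-(1-α)t/n} ≤ ε`; the factor `n` plays the role of the union bound over
the variables.
-/

noncomputable def tvDist {Ω : Type*} [Fintype Ω] (μ ν : Ω → ℝ) : ℝ :=
  ⨆ A : Finset Ω, |∑ x ∈ A, μ x - ∑ x ∈ A, ν x|

def IsDist {Ω : Type*} [Fintype Ω] (μ : Ω → ℝ) : Prop :=
  (∀ x, 0 ≤ μ x) ∧ ∑ x, μ x = 1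

noncomputable def condDist {I S : Type*} [Fintype I] [Fintype S] [DecidableEq I]
    (π : (I → S) → ℝ) (i : I) (x : I → S) : S → ℝ :=
  fun s => π (Function.update x i s) / ∑ s' : S, π (Function.update x i s')

noncomputable def totalInfluence {I S : Type*} [Fintype I] [Fintype S] [DecidableEq I]
    (π : (I → S) → ℝ) : ℝ :=
  ⨆ i : I, ∑ j : I,
    ⨆ p : {p : (I → S) × (I → S) // ∀ k, k ≠ j → p.1 k = p.2 k},
      tvDist (condDist π i p.1.1) (condDist π i p.1.2)

noncomputable def gibbsKernel {I S : Type*} [Fintype I] [Fintype S]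
    [DecidableEq I] [DecidableEq S] (π : (I → S) → ℝ) (x y : I → S) : ℝ :=
  (Fintype.card I : ℝ)⁻¹ *
    ∑ i : I, if ∀ j, j ≠ i → y j = x j then condDist π i x (y i) else 0

noncomputable def evolve {Ω : Type*} [Fintype Ω] (K : Ω → Ω → ℝ) (μ : Ω → ℝ) : Ω → ℝ :=
  fun y => ∑ x, μ x * K x y

noncomputable def iter {Ω : Type*} [Fintype Ω] (K : Ω → Ω → ℝ) (t : ℕ) (μ : Ω → ℝ) : Ω → ℝ :=
  (evolve K)^[t] μ

open Finset Function

section TotalVariation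

variable {Ω : Type*} [Fintype Ω]

lemma tvDist_nonneg (μ ν : Ω → ℝ) : 0 ≤ tvDist μ ν :=
  Real.iSup_nonneg fun _ => abs_nonneg _

lemma abs_sum_sub_le_tvDist (μ ν : Ω → ℝ) (A : Finset Ω) :
    |∑ x ∈ A, μ x - ∑ x ∈ A, ν x| ≤ tvDist μ ν :=
  le_ciSup (f := fun A : Finset Ω => |∑ x ∈ A, μ x - ∑ x ∈ A, ν x|)
    (Set.finite_range _).bddAbove A

lemma tvDist_le {μ ν : Ω → ℝ} {c : ℝ} (h : ∀ A : Finset Ω, |∑ x ∈ A, μ x - ∑ x ∈ A, ν x| ≤ c) :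
    tvDist μ ν ≤ c :=
  ciSup_le h

lemma tvDist_comm (μ ν : Ω → ℝ) : tvDist μ ν = tvDist ν μ := by
  simp only [tvDist, abs_sub_comm]

lemma sum_sub_mul_le_tvDist_mul {p q h : Ω → ℝ} {c : ℝ} (hc : 0 ≤ c) (h0 : ∀ x, 0 ≤ h x)
    (hle : ∀ x, h x ≤ c) : ∑ x, (p x - q x) * h x ≤ tvDist p q * c := by
  set A := univ.filter fun x => q x ≤ p x
  calc ∑ x, (p x - q x) * h x
      ≤ ∑ x ∈ A, (p x - q x) * h x := by
        rw [sum_filter]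
        gcongr with x
        split_ifs with hx
        · rfl
        · exact mul_nonpos_of_nonpos_of_nonneg (by linarith [not_le.1 hx]) (h0 x)
    _ ≤ ∑ x ∈ A, (p x - q x) * c := by
        gcongr with x hx
        · exact sub_nonneg.2 (mem_filter.1 hx).2
        · exact hle x
    _ = (∑ x ∈ A, p x - ∑ x ∈ A, q x) * c := by rw [← sum_sub_distrib, sum_mul]
    _ ≤ tvDist p q * c := by
        gcongr
        exact (le_abs_self _).trans (abs_sum_sub_le_tvDist p q A)

lemma abs_sum_sub_mul_le_tvDist_mul [Nonempty Ω] {p q g : Ω → ℝ} {c : ℝ}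
    (hpq : ∑ x, p x = ∑ x, q x) (hg : ∀ x y, g x - g y ≤ c) :
    |∑ x, (p x - q x) * g x| ≤ tvDist p q * c := by
  obtain ⟨m, hm⟩ := Finite.exists_min g
  have hc : 0 ≤ c := by simpa using hg m m
  have hshift : ∀ p q : Ω → ℝ, ∑ x, p x = ∑ x, q x →
      ∑ x, (p x - q x) * g x = ∑ x, (p x - q x) * (g x - g m) := by
    intro p q hpq
    simp only [mul_sub, sum_sub_distrib, ← sum_mul, hpq, sub_self, zero_mul, sub_zero]
  have h0 : ∀ x, 0 ≤ g x - g m := fun x => sub_nonneg.2 (hm x)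
  have hle : ∀ x, g x - g m ≤ c := fun x => hg x m
  rw [abs_le]
  constructor
  · have := sum_sub_mul_le_tvDist_mul (p := q) (q := p) hc h0 hle
    rw [tvDist_comm, ← hshift q p hpq.symm] at this
    have hneg : ∑ x, (q x - p x) * g x = -∑ x, (p x - q x) * g x := by
      rw [← sum_neg_distrib]; exact sum_congr rfl fun x _ => by ring
    linarith
  · rw [hshift p q hpq]
    exact sum_sub_mul_le_tvDist_mul hc h0 hle

lemma abs_sum_mul_sub_sum_mul_le {μ ν g : Ω → ℝ} {c : ℝ} (hμ : IsDist μ) (hν : IsDist ν)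
    (hg : ∀ x y, |g x - g y| ≤ c) : |∑ x, μ x * g x - ∑ y, ν y * g y| ≤ c := by
  have hsplit : ∑ x, μ x * g x - ∑ y, ν y * g y = ∑ x, ∑ y, μ x * ν y * (g x - g y) := by
    have hx : ∀ x, ∑ y, μ x * ν y * g x = μ x * g x := fun x => by
      rw [← sum_mul, ← mul_sum, hν.2, mul_one]
    have hy : ∀ y, ∑ x, μ x * ν y * g y = ν y * g y := fun y => by
      rw [← sum_mul, ← sum_mul, hμ.2, one_mul]
    simp only [mul_sub, sum_sub_distrib]
    rw [sum_comm (f := fun x y => μ x * ν y * g y)]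
    simp only [hx, hy]
  calc |∑ x, μ x * g x - ∑ y, ν y * g y|
      ≤ ∑ x, ∑ y, |μ x * ν y * (g x - g y)| := by
        rw [hsplit]
        exact (abs_sum_le_sum_abs _ _).trans (sum_le_sum fun x _ => abs_sum_le_sum_abs _ _)
    _ ≤ ∑ x, ∑ y, μ x * ν y * c := by
        gcongr with x _ y _
        rw [abs_mul, abs_of_nonneg (mul_nonneg (hμ.1 x) (hν.1 y))]
        exact mul_le_mul_of_nonneg_left (hg x y) (mul_nonneg (hμ.1 x) (hν.1 y))
    _ = c := by simp only [← sum_mul, ← mul_sum, hμ.2, hν.2, mul_one, one_mul]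

end TotalVariation

section Oscillation

variable {I S : Type*}

noncomputable def oscAt (f : (I → S) → ℝ) (j : I) : ℝ :=
  ⨆ p : {p : (I → S) × (I → S) // ∀ k, k ≠ j → p.1 k = p.2 k}, |f p.1.1 - f p.1.2|

lemma oscAt_nonneg (f : (I → S) → ℝ) (j : I) : 0 ≤ oscAt f j :=
  Real.iSup_nonneg fun _ => abs_nonneg _

lemma abs_sub_le_oscAt [Finite I] [Finite S] (f : (I → S) → ℝ) (j : I) {x y : I → S}
    (h : ∀ k, k ≠ j → x k = y k) : |f x - f y| ≤ oscAt f j :=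
  le_ciSup (f := fun p : {p : (I → S) × (I → S) // ∀ k, k ≠ j → p.1 k = p.2 k} =>
    |f p.1.1 - f p.1.2|) (Set.finite_range _).bddAbove ⟨(x, y), h⟩

lemma oscAt_le [Nonempty S] {f : (I → S) → ℝ} {j : I} {c : ℝ}
    (h : ∀ x y : I → S, (∀ k, k ≠ j → x k = y k) → |f x - f y| ≤ c) : oscAt f j ≤ c :=
  have : Nonempty {p : (I → S) × (I → S) // ∀ k, k ≠ j → p.1 k = p.2 k} :=
    ⟨⟨(Classical.arbitrary _, Classical.arbitrary _), fun _ _ => rfl⟩⟩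
  ciSup_le fun p => h p.1.1 p.1.2 p.2

lemma oscAt_boole_le_one [Nonempty S] (A : Finset (I → S)) [DecidablePred (· ∈ A)] (j : I) :
    oscAt (fun x => if x ∈ A then (1 : ℝ) else 0) j ≤ 1 :=
  oscAt_le fun x y _ => by split_ifs <;> norm_num

lemma abs_sub_le_sum_oscAt [Fintype I] [Finite S] (f : (I → S) → ℝ) (x y : I → S) :
    |f x - f y| ≤ ∑ j, oscAt f j := by
  classical
  let z : Finset I → I → S := fun s j => if j ∈ s then x j else y j
  have key : ∀ s : Finset I, |f (z s) - f y| ≤ ∑ j ∈ s, oscAt f j := by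
    intro s
    induction s using Finset.induction_on with
    | empty => simp [z]
    | insert a s ha ih =>
      rw [sum_insert ha]
      calc |f (z (insert a s)) - f y|
          ≤ |f (z (insert a s)) - f (z s)| + |f (z s) - f y| := abs_sub_le _ _ _
        _ ≤ oscAt f a + ∑ j ∈ s, oscAt f j :=
          add_le_add (abs_sub_le_oscAt f a fun k hk => by simp [z, hk]) ih
  simpa [z] using key univ

end Oscillation

section Kernel

variable {Ω : Type*} [Fintype Ω]

noncomputable def kernelOp (K : Ω → Ω → ℝ) (f : Ω → ℝ) (x : Ω) : ℝ :=
  ∑ y, K x y * f y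

lemma sum_evolve_mul (K : Ω → Ω → ℝ) (μ f : Ω → ℝ) :
    ∑ y, evolve K μ y * f y = ∑ x, μ x * kernelOp K f x := by
  simp only [evolve, kernelOp, sum_mul, mul_sum, mul_assoc]
  exact sum_comm

lemma sum_iter_mul (K : Ω → Ω → ℝ) (t : ℕ) (μ f : Ω → ℝ) :
    ∑ y, iter K t μ y * f y = ∑ x, μ x * (kernelOp K)^[t] f x := by
  induction t generalizing μ with
  | zero => rfl
  | succ t ih =>
    rw [iter, iterate_succ_apply, ← iter, ih, sum_evolve_mul, iterate_succ_apply']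

lemma evolve_eq_self_of_detailed_balance {K : Ω → Ω → ℝ} {π : Ω → ℝ}
    (hbal : ∀ x y, π x * K x y = π y * K y x) (hK : ∀ x, ∑ y, K x y = 1) :
    evolve K π = π := by
  funext y
  simp only [evolve, hbal _ y, ← mul_sum, hK, mul_one]

end Kernel

section Gibbs

variable {I S : Type*} [DecidableEq I]

lemma update_eq_update_of_agree {i : I} {x y : I → S} (h : ∀ k, k ≠ i → x k = y k) (s : S) :
    update x i s = update y i s :=
  update_eq_iff.2 ⟨by simp, fun k hk => by simp [hk, h k hk]⟩

variable [Fintype I] [Fintype S]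

lemma condDist_congr (π : (I → S) → ℝ) {i : I} {x y : I → S} (h : ∀ k, k ≠ i → x k = y k) :
    condDist π i x = condDist π i y := by
  funext s
  simp only [condDist, update_eq_update_of_agree h]

lemma condDist_isDist [Nonempty S] {π : (I → S) → ℝ} (hpos : ∀ x, 0 < π x) (i : I)
    (x : I → S) : IsDist (condDist π i x) := by
  have hZ : 0 < ∑ s, π (update x i s) := sum_pos (fun s _ => hpos _) univ_nonempty
  refine ⟨fun s => div_nonneg (hpos _).le hZ.le, ?_⟩
  simp only [condDist, ← sum_div, div_self hZ.ne']

noncomputable def influence (π : (I → S) → ℝ) (i j : I) : ℝ :=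
  ⨆ p : {p : (I → S) × (I → S) // ∀ k, k ≠ j → p.1 k = p.2 k},
    tvDist (condDist π i p.1.1) (condDist π i p.1.2)

lemma influence_nonneg (π : (I → S) → ℝ) (i j : I) : 0 ≤ influence π i j :=
  Real.iSup_nonneg fun _ => tvDist_nonneg _ _

lemma tvDist_condDist_le_influence (π : (I → S) → ℝ) (i j : I) {x y : I → S}
    (h : ∀ k, k ≠ j → x k = y k) :
    tvDist (condDist π i x) (condDist π i y) ≤ influence π i j :=
  le_ciSup (f := fun p : {p : (I → S) × (I → S) // ∀ k, k ≠ j → p.1 k = p.2 k} =>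
    tvDist (condDist π i p.1.1) (condDist π i p.1.2)) (Set.finite_range _).bddAbove ⟨(x, y), h⟩

lemma totalInfluence_nonneg (π : (I → S) → ℝ) : 0 ≤ totalInfluence π :=
  Real.iSup_nonneg fun i => sum_nonneg fun j _ => influence_nonneg π i j

lemma sum_influence_le_totalInfluence (π : (I → S) → ℝ) (i : I) :
    ∑ j, influence π i j ≤ totalInfluence π :=
  le_ciSup (f := fun i => ∑ j, influence π i j) (Set.finite_range _).bddAbove i

noncomputable def resampleOp (π : (I → S) → ℝ) (i : I) (f : (I → S) → ℝ) (x : I → S) : ℝ :=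
  ∑ s, condDist π i x s * f (update x i s)

variable [DecidableEq S]

lemma sum_ite_agree_eq_sum_update (i : I) (z : I → S) (c : (I → S) → ℝ) :
    ∑ w, (if ∀ j, j ≠ i → w j = z j then c w else 0) = ∑ s, c (update z i s) := by
  have himage : univ.filter (fun w : I → S => ∀ j, j ≠ i → w j = z j) =
      univ.image (update z i) := by
    ext w
    simp only [mem_filter, mem_univ, true_and, mem_image]
    exact ⟨fun h => ⟨w i, update_eq_iff.2 ⟨rfl, fun k hk => (h k hk).symm⟩⟩,
      by rintro ⟨s, rfl⟩ j hj; exact update_of_ne hj _ _⟩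
  rw [← sum_filter, himage, sum_image fun a _ b _ h => update_injective z i h]

lemma kernelOp_gibbsKernel (π : (I → S) → ℝ) (f : (I → S) → ℝ) (x : I → S) :
    kernelOp (gibbsKernel π) f x = (Fintype.card I : ℝ)⁻¹ * ∑ i, resampleOp π i f x := by
  simp only [kernelOp, gibbsKernel, mul_assoc, sum_mul, ← mul_sum, ite_mul, zero_mul]
  rw [sum_comm]
  simp only [sum_ite_agree_eq_sum_update, resampleOp, update_self]

lemma sum_gibbsKernel [Nonempty I] [Nonempty S] {π : (I → S) → ℝ} (hpos : ∀ x, 0 < π x)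
    (x : I → S) : ∑ y, gibbsKernel π x y = 1 := by
  have hcond : ∀ i, ∑ s, condDist π i x s = 1 := fun i => (condDist_isDist hpos i x).2
  have h := kernelOp_gibbsKernel π (fun _ => 1) x
  simp only [kernelOp, mul_one, resampleOp, hcond, sum_const, card_univ, nsmul_eq_mul] at h
  rw [h, inv_mul_cancel₀ (by exact_mod_cast Fintype.card_ne_zero)]

lemma gibbsKernel_detailed_balance (π : (I → S) → ℝ) (x y : I → S) :
    π x * gibbsKernel π x y = π y * gibbsKernel π y x := by
  simp only [gibbsKernel]
  rw [mul_left_comm (π x), mul_left_comm (π y)]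
  congr 1
  simp only [Finset.mul_sum]
  refine Finset.sum_congr rfl fun i _ => ?_
  by_cases h : ∀ j, j ≠ i → y j = x j
  · have h' : ∀ j, j ≠ i → x j = y j := fun j hj => (h j hj).symm
    rw [if_pos h, if_pos h', condDist_congr π h']
    simp only [condDist, update_eq_self, update_eq_iff.2 ⟨rfl, h⟩]
    ring
  · rw [if_neg h, if_neg fun h' => h fun j hj => (h' j hj).symm, mul_zero, mul_zero]

lemma evolve_gibbsKernel_self [Nonempty I] [Nonempty S] {π : (I → S) → ℝ}
    (hpos : ∀ x, 0 < π x) : evolve (gibbsKernel π) π = π :=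
  evolve_eq_self_of_detailed_balance (gibbsKernel_detailed_balance π) (sum_gibbsKernel hpos)

end Gibbs

section Contraction

variable {I S : Type*} [Fintype I] [Fintype S] [DecidableEq I]

lemma resampleOp_congr (π : (I → S) → ℝ) (i : I) (f : (I → S) → ℝ) {x y : I → S}
    (h : ∀ k, k ≠ i → x k = y k) : resampleOp π i f x = resampleOp π i f y := by
  simp only [resampleOp, condDist_congr π h, update_eq_update_of_agree h]

lemma abs_resampleOp_sub_le [Nonempty S] {π : (I → S) → ℝ} (hpos : ∀ x, 0 < π x) (i j : I)
    (f : (I → S) → ℝ) {x y : I → S} (h : ∀ k, k ≠ j → x k = y k) :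
    |resampleOp π i f x - resampleOp π i f y| ≤ oscAt f j + influence π i j * oscAt f i := by
  have hp := condDist_isDist hpos i x
  have hq := condDist_isDist hpos i y
  -- Resample both configurations to the same value `s`; what remains is the change of its law.
  have hsplit : resampleOp π i f x - resampleOp π i f y
      = ∑ s, condDist π i x s * (f (update x i s) - f (update y i s))
        + ∑ s, (condDist π i x s - condDist π i y s) * f (update y i s) := by
    simp only [resampleOp, ← sum_add_distrib, ← sum_sub_distrib]
    exact sum_congr rfl fun s _ => by ring
  have hsame : |∑ s, condDist π i x s * (f (update x i s) - f (update y i s))| ≤ oscAt f j :=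
    calc _ ≤ ∑ s, condDist π i x s * oscAt f j := by
          refine (abs_sum_le_sum_abs _ _).trans (sum_le_sum fun s _ => ?_)
          rw [abs_mul, abs_of_nonneg (hp.1 s)]
          refine mul_le_mul_of_nonneg_left (abs_sub_le_oscAt f j fun k hk => ?_) (hp.1 s)
          simp only [update_apply]
          split_ifs
          · rfl
          · exact h k hk
      _ = oscAt f j := by rw [← sum_mul, hp.2, one_mul]
  have hlaw : |∑ s, (condDist π i x s - condDist π i y s) * f (update y i s)|
      ≤ influence π i j * oscAt f i :=
    (abs_sum_sub_mul_le_tvDist_mul (hp.2.trans hq.2.symm) fun s s' =>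
      (le_abs_self _).trans (abs_sub_le_oscAt f i fun k hk => by simp [hk])).trans
      (mul_le_mul_of_nonneg_right (tvDist_condDist_le_influence π i j h) (oscAt_nonneg f i))
  rw [hsplit]
  exact (abs_add_le _ _).trans (add_le_add hsame hlaw)

lemma one_sub_totalInfluence_div_card_le_one [Nonempty I] (π : (I → S) → ℝ) :
    (1 - totalInfluence π) / Fintype.card I ≤ 1 := by
  have hN : (1 : ℝ) ≤ Fintype.card I := Nat.one_le_cast.2 Fintype.card_pos
  rw [div_le_one (by positivity)]
  linarith [totalInfluence_nonneg π]

variable [DecidableEq S]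

lemma oscAt_kernelOp_gibbsKernel_le [Nonempty I] [Nonempty S] {π : (I → S) → ℝ}
    (hpos : ∀ x, 0 < π x) (f : (I → S) → ℝ) (j : I) :
    oscAt (kernelOp (gibbsKernel π) f) j ≤ (Fintype.card I : ℝ)⁻¹ *
      ((Fintype.card I - 1) * oscAt f j + ∑ i, influence π i j * oscAt f i) := by
  refine oscAt_le fun x y h => ?_
  rw [kernelOp_gibbsKernel, kernelOp_gibbsKernel, ← mul_sub, ← sum_sub_distrib, abs_mul,
    abs_of_nonneg (by positivity)]
  gcongr
  -- Resampling site `j` itself erases the only coordinate where `x` and `y` differ.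
  have hj : resampleOp π j f x - resampleOp π j f y = 0 := sub_eq_zero.2 (resampleOp_congr π j f h)
  calc |∑ i, (resampleOp π i f x - resampleOp π i f y)|
      = |∑ i ∈ univ.erase j, (resampleOp π i f x - resampleOp π i f y)| := by
        rw [sum_erase univ (f := fun i => resampleOp π i f x - resampleOp π i f y) hj]
    _ ≤ ∑ i ∈ univ.erase j, (oscAt f j + influence π i j * oscAt f i) :=
        (abs_sum_le_sum_abs _ _).trans (sum_le_sum fun i _ => abs_resampleOp_sub_le hpos i j f h)
    _ = (Fintype.card I - 1) * oscAt f j + ∑ i ∈ univ.erase j, influence π i j * oscAt f i := by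
        rw [sum_add_distrib, sum_const, card_erase_of_mem (mem_univ j), card_univ, nsmul_eq_mul,
          Nat.cast_pred Fintype.card_pos]
    _ ≤ (Fintype.card I - 1) * oscAt f j + ∑ i, influence π i j * oscAt f i := by
        gcongr
        · exact fun i _ _ => mul_nonneg (influence_nonneg π i j) (oscAt_nonneg f i)
        · exact erase_subset j univ

lemma sum_oscAt_kernelOp_gibbsKernel_le [Nonempty I] [Nonempty S] {π : (I → S) → ℝ}
    (hpos : ∀ x, 0 < π x) (f : (I → S) → ℝ) :
    ∑ j, oscAt (kernelOp (gibbsKernel π) f) j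
      ≤ (1 - (1 - totalInfluence π) / Fintype.card I) * ∑ j, oscAt f j := by
  set N : ℝ := (Fintype.card I : ℝ)
  have hN : 0 < N := by positivity
  calc ∑ j, oscAt (kernelOp (gibbsKernel π) f) j
      ≤ ∑ j, N⁻¹ * ((N - 1) * oscAt f j + ∑ i, influence π i j * oscAt f i) :=
        sum_le_sum fun j _ => oscAt_kernelOp_gibbsKernel_le hpos f j
    _ = N⁻¹ * ((N - 1) * ∑ j, oscAt f j + ∑ i, (∑ j, influence π i j) * oscAt f i) := by
        rw [← mul_sum, sum_add_distrib, ← mul_sum, sum_comm]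
        simp only [sum_mul]
    _ ≤ N⁻¹ * ((N - 1) * ∑ j, oscAt f j + ∑ i, totalInfluence π * oscAt f i) := by
        gcongr with i
        · exact oscAt_nonneg f i
        · exact sum_influence_le_totalInfluence π i
    _ = (1 - (1 - totalInfluence π) / N) * ∑ j, oscAt f j := by
        rw [← mul_sum]
        field_simp
        ring

lemma sum_oscAt_iterate_kernelOp_gibbsKernel_le [Nonempty I] [Nonempty S] {π : (I → S) → ℝ}
    (hpos : ∀ x, 0 < π x) (f : (I → S) → ℝ) (t : ℕ) :
    ∑ j, oscAt ((kernelOp (gibbsKernel π))^[t] f) j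
      ≤ (1 - (1 - totalInfluence π) / Fintype.card I) ^ t * ∑ j, oscAt f j := by
  have hκ := sub_nonneg.2 (one_sub_totalInfluence_div_card_le_one (S := S) π)
  induction t with
  | zero => simp
  | succ t ih =>
    rw [iterate_succ_apply', pow_succ', mul_assoc]
    exact (sum_oscAt_kernelOp_gibbsKernel_le hpos _).trans (mul_le_mul_of_nonneg_left ih hκ)

end Contraction

lemma mul_one_sub_div_pow_le {N c ε : ℝ} {t : ℕ} (hc : 0 < c) (hcN : c ≤ N) (hε : 0 < ε)
    (ht : N / c * Real.log (N / ε) ≤ t) : N * (1 - c / N) ^ t ≤ ε := by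
  have hN : 0 < N := hc.trans_le hcN
  have hlog : Real.log (N / ε) ≤ c * t / N := by
    rw [le_div_iff₀ hN]
    rw [div_mul_eq_mul_div, div_le_iff₀ hc] at ht
    linarith
  calc N * (1 - c / N) ^ t
      ≤ N * Real.exp (-(c / N)) ^ t := by
        gcongr
        · exact sub_nonneg.2 ((div_le_one hN).2 hcN)
        · linarith [Real.add_one_le_exp (-(c / N))]
    _ = N * Real.exp (-Real.log (N / ε)) * Real.exp (-(c * t / N - Real.log (N / ε))) := by
        rw [← Real.exp_nat_mul, mul_assoc, ← Real.exp_add]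
        ring_nf
    _ ≤ N * Real.exp (-Real.log (N / ε)) * 1 := by
        gcongr
        exact Real.exp_le_one_iff.2 (by linarith)
    _ = ε := by
        rw [Real.exp_neg, Real.exp_log (div_pos hN hε), mul_one, inv_div, mul_div_cancel₀ _ hN.ne']

/-- sequential Gibbs sampling on an `n`-variable distribution `π`
with total influence `α < 1` satisfies `t_mix(ε) ≤ (n/(1−α))·log(n/ε)`:
for all `t` at least this value and any initial distribution `μ₀`,
`‖P^{(t)} μ₀ − π‖_TV ≤ ε`. -/
theorem gibbs_mixing_time_dobrushin {n : ℕ} (hn : 0 < n)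
    {S : Type*} [Fintype S] [DecidableEq S]
    (π : (Fin n → S) → ℝ) (hπ : IsDist π) (hpos : ∀ x, 0 < π x)
    (hα : totalInfluence π < 1)
    (ε : ℝ) (hε : 0 < ε) (t : ℕ)
    (ht : (n : ℝ) / (1 - totalInfluence π) * Real.log (n / ε) ≤ t)
    (μ0 : (Fin n → S) → ℝ) (hμ0 : IsDist μ0) :
    tvDist (iter (gibbsKernel π) t μ0) π ≤ ε := by
  have : Nonempty (Fin n) := ⟨⟨0, hn⟩⟩
  have : Nonempty S := by
    obtain ⟨x, -⟩ := exists_ne_zero_of_sum_ne_zero (hπ.2.trans_ne one_ne_zero)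
    exact ⟨x ⟨0, hn⟩⟩
  have hrate : (1 - totalInfluence π) / n ≤ 1 := by
    simpa using one_sub_totalInfluence_div_card_le_one (I := Fin n) (S := S) π
  refine tvDist_le fun A => ?_
  set g : (Fin n → S) → ℝ := fun x => if x ∈ A then 1 else 0
  set G := (kernelOp (gibbsKernel π))^[t] g
  have hmass : ∀ ν : (Fin n → S) → ℝ, ∑ x ∈ A, ν x = ∑ x, ν x * g x := fun ν => by
    simp [g, mul_ite, sum_ite_mem]
  have hstat : ∑ x, π x * g x = ∑ x, π x * G x := by
    rw [← sum_iter_mul, iter, iterate_fixed (evolve_gibbsKernel_self hpos)]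
  rw [hmass, hmass, sum_iter_mul, hstat]
  calc |∑ x, μ0 x * G x - ∑ x, π x * G x|
      ≤ ∑ j, oscAt G j := abs_sum_mul_sub_sum_mul_le hμ0 hπ (abs_sub_le_sum_oscAt G)
    _ ≤ (1 - (1 - totalInfluence π) / n) ^ t * ∑ j, oscAt g j := by
        simpa using sum_oscAt_iterate_kernelOp_gibbsKernel_le hpos g t
    _ ≤ (1 - (1 - totalInfluence π) / n) ^ t * n := by
        gcongr
        simpa using sum_le_sum fun j (_ : j ∈ univ) => oscAt_boole_le_one A j
    _ ≤ ε := by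
        rw [mul_comm]
        exact mul_one_sub_div_pow_le (by linarith) ((div_le_one (by positivity)).1 hrate) hε ht
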